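/- arXiv:2103.00347 — 12 statements merged into one kernel-verified Lean document; each statement's English description precedes it below -/
import Mathlib

section
/- For all nonnegative integers nL1, nL2, nL3, nH1, nH2, nH3, the insolvency-based insurance cost function satisfies the submodularity inequality c(nL1+nL3, nH1+nH3) + c(nL2+nL3, nH2+nH3) ≥ c(nL1+nL2+nL3, nH1+nH2+nH3) + c(nL3, nH3). Moreover, the inequality is strict whenever nL1 + nH1 > 0 and nL2 + nH2 > 0 (i.e., whenever the two pools have nonempty non-overlapping portions). -/
/-!
The linear part `rL nL + rH nH` of the cost is additive in the pool, so only the insolvency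
loading `b √(nL RL + nH RH)` matters. Its radicand is additive as well, so submodularity of the
cost reduces to `√(t + a + s) + √t ≤ √(t + a) + √(t + s)` for `a, s, t ≥ 0`: the increments of a
concave function decrease. Strict concavity of `√` and `RL, RH > 0` give the strict version.
-/

section IncreasingDifferences

variable {𝕜 : Type*} [Field 𝕜] {s : Set 𝕜} {f : 𝕜 → 𝕜} {x d e : 𝕜}

theorem add_eq_div_smul_add_div_smul (hde : d + e ≠ 0) :
    (e / (d + e)) • x + (d / (d + e)) • (x + (d + e)) = x + d := by
  simp only [smul_eq_mul]; field_simp; ring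

theorem div_add_div_eq_one_of_ne_zero (hde : d + e ≠ 0) : e / (d + e) + d / (d + e) = 1 := by
  field_simp; ring

variable [LinearOrder 𝕜] [IsStrictOrderedRing 𝕜]

/- Both `x + d` and `x + e` lie on the segment from `x` to `x + (d + e)`, with mirrored weights;
adding the two concavity inequalities gives the claim. -/
theorem ConcaveOn.map_add_add_le (hf : ConcaveOn 𝕜 s f) (hx : x ∈ s) (hxde : x + d + e ∈ s)
    (hd : 0 ≤ d) (he : 0 ≤ e) : f (x + d + e) + f x ≤ f (x + d) + f (x + e) := by
  rcases (add_nonneg hd he).eq_or_lt with hde | hde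
  · obtain ⟨rfl, rfl⟩ : d = 0 ∧ e = 0 := ⟨by linarith, by linarith⟩
    simp
  rw [add_assoc] at hxde ⊢
  have hed : 0 < e + d := by rwa [add_comm]
  have hd_seg := hf.2 hx hxde (div_nonneg he hde.le) (div_nonneg hd hde.le)
    (div_add_div_eq_one_of_ne_zero hde.ne')
  have he_seg := hf.2 hx (add_comm d e ▸ hxde) (div_nonneg hd hed.le) (div_nonneg he hed.le)
    (div_add_div_eq_one_of_ne_zero hed.ne')
  rw [add_eq_div_smul_add_div_smul hde.ne'] at hd_seg
  rw [add_eq_div_smul_add_div_smul hed.ne', add_comm e d] at he_seg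
  simp only [smul_eq_mul] at hd_seg he_seg
  linear_combination
    hd_seg + he_seg - (f x + f (x + (d + e))) * div_add_div_eq_one_of_ne_zero hde.ne'

theorem StrictConcaveOn.map_add_add_lt (hf : StrictConcaveOn 𝕜 s f) (hx : x ∈ s)
    (hxde : x + d + e ∈ s) (hd : 0 < d) (he : 0 < e) :
    f (x + d + e) + f x < f (x + d) + f (x + e) := by
  rw [add_assoc] at hxde ⊢
  have hde : 0 < d + e := add_pos hd he
  have hed : 0 < e + d := add_pos he hd
  have hd_seg := hf.2 hx hxde (by linarith) (div_pos he hde) (div_pos hd hde)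
    (div_add_div_eq_one_of_ne_zero hde.ne')
  have he_seg := hf.2 hx (add_comm d e ▸ hxde) (by linarith) (div_pos hd hed) (div_pos he hed)
    (div_add_div_eq_one_of_ne_zero hed.ne')
  rw [add_eq_div_smul_add_div_smul hde.ne'] at hd_seg
  rw [add_eq_div_smul_add_div_smul hed.ne', add_comm e d] at he_seg
  simp only [smul_eq_mul] at hd_seg he_seg
  linear_combination
    hd_seg + he_seg - (f x + f (x + (d + e))) * div_add_div_eq_one_of_ne_zero hde.ne'

end IncreasingDifferences

namespace Real

variable {x d e : ℝ}

theorem sqrt_add_add_add_sqrt_le (hx : 0 ≤ x) (hd : 0 ≤ d) (he : 0 ≤ e) :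
    √(x + d + e) + √x ≤ √(x + d) + √(x + e) :=
  strictConcaveOn_sqrt.concaveOn.map_add_add_le hx (Set.mem_Ici.2 (by positivity)) hd he

theorem sqrt_add_add_add_sqrt_lt (hx : 0 ≤ x) (hd : 0 < d) (he : 0 < e) :
    √(x + d + e) + √x < √(x + d) + √(x + e) :=
  strictConcaveOn_sqrt.map_add_add_lt hx (Set.mem_Ici.2 (by positivity)) hd he

end Real

theorem natCast_mul_add_natCast_mul_pos {R : Type*} [Semiring R] [PartialOrder R]
    [IsStrictOrderedRing R] {α β : R} (hα : 0 < α) (hβ : 0 < β) {m n : ℕ} (hmn : 0 < m + n) :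
    0 < (m : R) * α + n * β := by
  rcases Nat.eq_zero_or_pos m with rfl | hm
  · have hn : 0 < n := by omega
    simpa using mul_pos (Nat.cast_pos.2 hn) hβ
  · exact add_pos_of_pos_of_nonneg (mul_pos (Nat.cast_pos.2 hm) hα) (by positivity)

/-- Submodularity of the insolvency-based insurance cost function, with strictness
whenever the two pools have nonempty non-overlapping portions. -/
theorem insolvency_cost_submodular
    (V b rL rH : ℝ) (hV : 0 < V) (hb : 0 < b)
    (hrL : 0 < rL) (hLH : rL < rH) (hrH : rH < 1 / 2)
    (c : ℕ → ℕ → ℝ)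
    (hc : ∀ nL nH : ℕ, c nL nH =
      V * (rL * nL + rH * nH +
        b * Real.sqrt (nL * (rL * (1 - rL)) + nH * (rH * (1 - rH)))))
    (nL1 nL2 nL3 nH1 nH2 nH3 : ℕ) :
    c (nL1 + nL3) (nH1 + nH3) + c (nL2 + nL3) (nH2 + nH3) ≥
      c (nL1 + nL2 + nL3) (nH1 + nH2 + nH3) + c nL3 nH3 ∧
    (0 < nL1 + nH1 → 0 < nL2 + nH2 →
      c (nL1 + nL3) (nH1 + nH3) + c (nL2 + nL3) (nH2 + nH3) >
        c (nL1 + nL2 + nL3) (nH1 + nH2 + nH3) + c nL3 nH3) := by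
  have hRL : 0 < rL * (1 - rL) := by nlinarith
  have hRH : 0 < rH * (1 - rH) := by nlinarith
  obtain ⟨q, hq⟩ : ∃ q : ℕ → ℕ → ℝ,
      ∀ m n : ℕ, q m n = m * (rL * (1 - rL)) + n * (rH * (1 - rH)) := ⟨_, fun _ _ ↦ rfl⟩
  have hq_add (m m' n n' : ℕ) : q (m + m') (n + n') = q m n + q m' n' := by
    simp only [hq]; push_cast; ring
  have hq_nonneg (m n : ℕ) : 0 ≤ q m n := by rw [hq]; positivity
  have hq_pos {m n : ℕ} (hmn : 0 < m + n) : 0 < q m n :=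
    hq m n ▸ natCast_mul_add_natCast_mul_pos hRL hRH hmn
  have hc_split (m n : ℕ) : c m n = V * (rL * m + rH * n) + V * b * √(q m n) := by
    rw [hc, hq]; ring
  have hgap : c (nL1 + nL3) (nH1 + nH3) + c (nL2 + nL3) (nH2 + nH3) -
      (c (nL1 + nL2 + nL3) (nH1 + nH2 + nH3) + c nL3 nH3) =
      V * b * (√(q nL3 nH3 + q nL1 nH1) + √(q nL3 nH3 + q nL2 nH2) -
        (√(q nL3 nH3 + q nL1 nH1 + q nL2 nH2) + √(q nL3 nH3))) := by
    simp only [hc_split, hq_add]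
    push_cast
    ring_nf
  constructor
  · rw [ge_iff_le, ← sub_nonneg, hgap]
    exact mul_nonneg (by positivity) <| sub_nonneg.2 <|
      Real.sqrt_add_add_add_sqrt_le (hq_nonneg _ _) (hq_nonneg _ _) (hq_nonneg _ _)
  · intro h1 h2
    rw [gt_iff_lt, ← sub_pos, hgap]
    exact mul_pos (by positivity) <| sub_pos.2 <|
      Real.sqrt_add_add_add_sqrt_lt (hq_nonneg _ _) (hq_pos h1) (hq_pos h2)
end

section
/- Suppose NL ≥ 1, NH ≥ 1 and the even-split price of the grand coalition is strictly less than the per-capita cost of the low-risk players alone, i.e., c(NL, NH)/(NL + NH) < c(NL, 0)/NL. Then the grand coalition is core-stable under even-split pricing: for every pair of integers nL, nH with 0 ≤ nL ≤ NL, 0 ≤ nH ≤ NH and nL + nH ≥ 1, one has c(nL, nH)/(nL + nH) ≥ c(NL, NH)/(NL + NH). -/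
/-- For a sequence with decreasing increments, chords lie below:
`n * (f N - f 0) ≤ N * (f n - f 0)` for `n ≤ N`. -/
lemma even_split_concave_chord (f : ℕ → ℝ)
    (hd : ∀ i j : ℕ, i ≤ j → f (j + 1) - f j ≤ f (i + 1) - f i)
    {n N : ℕ} (hn : n ≤ N) :
    (n : ℝ) * (f N - f 0) ≤ (N : ℝ) * (f n - f 0) := by
  rcases eq_or_lt_of_le hn with h | h
  · subst h; exact le_refl _
  · have tel : ∀ k : ℕ, f k - f 0 = ∑ i ∈ Finset.range k, (f (i + 1) - f i) :=
      fun k => (Finset.sum_range_sub f k).symm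
    set d : ℝ := f (n + 1) - f n with hdval
    have h1 : (n : ℝ) * d ≤ ∑ i ∈ Finset.range n, (f (i + 1) - f i) := by
      have := Finset.card_nsmul_le_sum (Finset.range n) (fun i => f (i + 1) - f i) d
        (fun i hi => hd i n (le_of_lt (Finset.mem_range.mp hi)))
      simpa [nsmul_eq_mul] using this
    have h2 : ∑ i ∈ Finset.Ico n N, (f (i + 1) - f i) ≤ ((N : ℝ) - n) * d := by
      have := Finset.sum_le_card_nsmul (Finset.Ico n N) (fun i => f (i + 1) - f i) d
        (fun i hi => hd n i (Finset.mem_Ico.mp hi).1)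
      have hcard : (Finset.Ico n N).card = N - n := Nat.card_Ico n N
      rw [hcard, nsmul_eq_mul] at this
      have : ∑ i ∈ Finset.Ico n N, (f (i + 1) - f i) ≤ ((N - n : ℕ) : ℝ) * d := this
      rwa [Nat.cast_sub hn] at this
    have hsplitsum : (∑ i ∈ Finset.range n, (f (i + 1) - f i))
        + ∑ i ∈ Finset.Ico n N, (f (i + 1) - f i)
        = ∑ i ∈ Finset.range N, (f (i + 1) - f i) :=
      Finset.sum_range_add_sum_Ico _ hn
    have hNn : (0 : ℝ) ≤ (N : ℝ) - n := by
      have : (n : ℝ) ≤ N := Nat.cast_le.mpr hn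
      linarith
    have hn0 : (0 : ℝ) ≤ (n : ℝ) := Nat.cast_nonneg n
    rw [tel n, tel N, ← hsplitsum]
    nlinarith [mul_le_mul_of_nonneg_left h1 hNn, mul_le_mul_of_nonneg_left h2 hn0]

/-- If the even-split price of the grand coalition is strictly less than the
per-capita cost of the low-risk players alone, the grand coalition is
core-stable under even-split pricing. -/
theorem even_split_core_stable
    (c : ℕ → ℕ → ℝ)
    (h0 : c 0 0 = 0)
    (hdimL : ∀ a a' b b' : ℕ, a ≤ a' → b ≤ b' →
      c (a + 1) b - c a b ≥ c (a' + 1) b' - c a' b')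
    (hdimH : ∀ a a' b b' : ℕ, a ≤ a' → b ≤ b' →
      c a (b + 1) - c a b ≥ c a' (b' + 1) - c a' b')
    (hcostlier : ∀ a b : ℕ, c (a + 1) b - c a b ≤ c a (b + 1) - c a b)
    (NL NH : ℕ) (hNL : 1 ≤ NL) (hNH : 1 ≤ NH)
    (hsplit : c NL NH / ((NL : ℝ) + NH) < c NL 0 / (NL : ℝ)) :
    ∀ nL nH : ℕ, nL ≤ NL → nH ≤ NH → 1 ≤ nL + nH →
      c nL nH / ((nL : ℝ) + nH) ≥ c NL NH / ((NL : ℝ) + NH) := by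
  have hA1 : (1 : ℝ) ≤ (NL : ℝ) := by exact_mod_cast hNL
  have hB1 : (1 : ℝ) ≤ (NH : ℝ) := by exact_mod_cast hNH
  have hApos : (0 : ℝ) < NL := lt_of_lt_of_le one_pos hA1
  have hBpos : (0 : ℝ) < NH := lt_of_lt_of_le one_pos hB1
  have hABpos : (0 : ℝ) < (NL : ℝ) + NH := by linarith
  -- hsplit in multiplied form: c NL NH * NL < c NL 0 * (NL + NH)
  have hsplit' : c NL NH * NL < c NL 0 * ((NL : ℝ) + NH) :=
    (div_lt_div_iff₀ hABpos hApos).mp hsplit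
  -- decreasing differences (submodularity across the two coordinates)
  have decdiff : ∀ nL nH : ℕ, nL ≤ NL →
      c NL nH - c NL 0 ≤ c nL nH - c nL 0 := by
    intro nL nH h1
    have t1 : c nL nH - c nL 0 = ∑ j ∈ Finset.range nH, (c nL (j + 1) - c nL j) :=
      (Finset.sum_range_sub (fun j => c nL j) nH).symm
    have t2 : c NL nH - c NL 0 = ∑ j ∈ Finset.range nH, (c NL (j + 1) - c NL j) :=
      (Finset.sum_range_sub (fun j => c NL j) nH).symm
    rw [t1, t2]
    exact Finset.sum_le_sum fun j _ => hdimH nL NL j j h1 le_rfl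
  -- the L-heavy case
  have lheavy : ∀ nL nH : ℕ, nL ≤ NL → nH ≤ NH → (nH : ℝ) * NL ≤ (nL : ℝ) * NH →
      ((nL : ℝ) + nH) * c NL NH ≤ ((NL : ℝ) + NH) * c nL nH := by
    intro nL nH h1 h2 hheavy
    -- chord on row 0
    have row0 : (nL : ℝ) * c NL 0 ≤ (NL : ℝ) * c nL 0 := by
      have := even_split_concave_chord (fun a => c a 0)
        (fun i j hij => hdimL i j 0 0 hij le_rfl) h1
      simpa [h0] using this
    -- chord on column NL
    have colNL : (nH : ℝ) * (c NL NH - c NL 0) ≤ (NH : ℝ) * (c NL nH - c NL 0) :=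
      even_split_concave_chord (fun b => c NL b)
        (fun i j hij => hdimH NL NL i j le_rfl hij) h2
    have dd := decdiff nL nH h1
    have ha0 : (0 : ℝ) ≤ (nL : ℝ) := Nat.cast_nonneg nL
    have hb0 : (0 : ℝ) ≤ (nH : ℝ) := Nat.cast_nonneg nH
    have hABnn : (0 : ℝ) ≤ (NL : ℝ) + NH := le_of_lt hABpos
    have hAnn : (0 : ℝ) ≤ (NL : ℝ) := le_of_lt hApos
    have hBnn : (0 : ℝ) ≤ (NH : ℝ) := le_of_lt hBpos
    have main : (NL : ℝ) * NH * (((nL : ℝ) + nH) * c NL NH)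
        ≤ (NL : ℝ) * NH * (((NL : ℝ) + NH) * c nL nH) := by
      nlinarith [mul_le_mul_of_nonneg_left dd
          (mul_nonneg (mul_nonneg hAnn hBnn) hABnn),
        mul_le_mul_of_nonneg_left row0 (mul_nonneg hBnn hABnn),
        mul_le_mul_of_nonneg_left colNL (mul_nonneg hAnn hABnn),
        mul_nonneg (sub_nonneg.mpr hheavy) (le_of_lt (sub_pos.mpr hsplit'))]
    exact le_of_mul_le_mul_left main (mul_pos hApos hBpos)
  -- main claim by induction on nH, shifting an H-player to an L-player in the H-heavy case
  have key : ∀ nH nL : ℕ, nL ≤ NL → nH ≤ NH →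
      ((nL : ℝ) + nH) * c NL NH ≤ ((NL : ℝ) + NH) * c nL nH := by
    intro nH
    induction nH with
    | zero =>
      intro nL h1 _
      have := lheavy nL 0 h1 (Nat.zero_le NH)
        (by simpa using mul_nonneg (Nat.cast_nonneg nL) (le_of_lt hBpos))
      simpa using this
    | succ m IH =>
      intro nL h1 h2
      by_cases hcase : (m + 1) * NL ≤ nL * NH
      · have : ((m : ℝ) + 1) * NL ≤ (nL : ℝ) * NH := by exact_mod_cast hcase
        have := lheavy nL (m + 1) h1 h2 (by push_cast; linarith)
        push_cast at this ⊢
        linarith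
      · push_neg at hcase
        have hnLlt : nL < NL := by
          have hmn : (m + 1) * NL ≤ NH * NL := Nat.mul_le_mul_right NL h2
          have : nL * NH < NL * NH := by
            calc nL * NH < (m + 1) * NL := hcase
              _ ≤ NH * NL := hmn
              _ = NL * NH := Nat.mul_comm NH NL
          exact Nat.lt_of_mul_lt_mul_right this
        have shift : c (nL + 1) m ≤ c nL (m + 1) := by
          have := hcostlier nL m
          linarith
        have hIH := IH (nL + 1) hnLlt (le_trans (Nat.le_succ m) h2)
        push_cast at hIH ⊢
        nlinarith [mul_le_mul_of_nonneg_left shift (le_of_lt hABpos)]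
  intro nL nH h1 h2 h3
  have hmpos : (0 : ℝ) < (nL : ℝ) + nH := by
    have : (1 : ℝ) ≤ (nL : ℝ) + nH := by exact_mod_cast h3
    linarith
  rw [ge_iff_le, div_le_div_iff₀ hABpos hmpos]
  have := key nH nL h1 h2
  nlinarith [this]
end

section
/- Suppose NL ≥ 1, NH ≥ 1 and c(NL, NH)/(NL + NH) ≤ c(NL, 0)/NL for the insolvency-based insurance cost function c. Then for every pair of integers nL, nH with 0 ≤ nL ≤ NL, 0 ≤ nH ≤ NH and nL + nH ≥ 1, one has c(nL, nH)/(nL + nH) ≥ c(NL, NH)/(NL + NH); that is, the grand coalition is core-stable under even-split pricing. -/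
/-- Chord inequality for the square root (concavity along a segment). -/
lemma sqrt_chord_aux (X R t T : ℝ) (hX : 0 ≤ X) (hR : 0 ≤ R) (ht : 0 ≤ t)
    (htT : t ≤ T) :
    (T - t) * Real.sqrt X + t * Real.sqrt (X + T * R) ≤ T * Real.sqrt (X + t * R) := by
  have hT : 0 ≤ T := le_trans ht htT
  have h1 : 0 ≤ X + T * R := by positivity
  have h2 : 0 ≤ X + t * R := by positivity
  have hs1n : 0 ≤ Real.sqrt X := Real.sqrt_nonneg _
  have hs2n : 0 ≤ Real.sqrt (X + T * R) := Real.sqrt_nonneg _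
  have hs3n : 0 ≤ Real.sqrt (X + t * R) := Real.sqrt_nonneg _
  have hq1 : Real.sqrt X ^ 2 = X := Real.sq_sqrt hX
  have hq2 : Real.sqrt (X + T * R) ^ 2 = X + T * R := Real.sq_sqrt h1
  have hq3 : Real.sqrt (X + t * R) ^ 2 = X + t * R := Real.sq_sqrt h2
  set s1 := Real.sqrt X
  set s2 := Real.sqrt (X + T * R)
  set s3 := Real.sqrt (X + t * R)
  have hLnn : 0 ≤ (T - t) * s1 + t * s2 := by
    have h := sub_nonneg.2 htT
    positivity
  have hid : (T * s3) ^ 2 - ((T - t) * s1 + t * s2) ^ 2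
      = t * (T - t) * (s1 - s2) ^ 2 := by
    linear_combination (T ^ 2) * hq3 - (T * (T - t)) * hq1 - (t * T) * hq2
  have hsq : ((T - t) * s1 + t * s2) ^ 2 ≤ (T * s3) ^ 2 := by
    nlinarith [mul_nonneg (mul_nonneg ht (sub_nonneg.2 htT)) (sq_nonneg (s1 - s2))]
  calc (T - t) * s1 + t * s2
      = Real.sqrt (((T - t) * s1 + t * s2) ^ 2) := (Real.sqrt_sq hLnn).symm
    _ ≤ Real.sqrt ((T * s3) ^ 2) := Real.sqrt_le_sqrt hsq
    _ = T * s3 := Real.sqrt_sq (by positivity)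

/-- Adding low-risk mass lowers the per-capita price. -/
lemma stepL_aux (rL rH b RL RH : ℝ) (hb : 0 ≤ b) (hr : 0 ≤ rL) (hLH : rL ≤ rH)
    (hRL : 0 ≤ RL) (hRR : RL ≤ RH) (x x' y : ℝ) (hx : 0 ≤ x) (hxx : x ≤ x')
    (hy : 0 ≤ y) (hpos : 0 < x + y) :
    (rL * x' + rH * y + b * Real.sqrt (x' * RL + y * RH)) / (x' + y) ≤
      (rL * x + rH * y + b * Real.sqrt (x * RL + y * RH)) / (x + y) := by
  have hpos' : 0 < x' + y := lt_of_lt_of_le hpos (by linarith)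
  rw [div_le_div_iff₀ hpos' hpos]
  have hRH : 0 ≤ RH := le_trans hRL hRR
  have hx' : 0 ≤ x' := le_trans hx hxx
  have hS : 0 ≤ x * RL + y * RH := by positivity
  have hS' : 0 ≤ x' * RL + y * RH := by positivity
  -- volatility part: (x+y) * sqrt S' ≤ (x'+y) * sqrt S
  have hvol : (x + y) * Real.sqrt (x' * RL + y * RH) ≤
      (x' + y) * Real.sqrt (x * RL + y * RH) := by
    have hkey : (x + y) ^ 2 * (x' * RL + y * RH) ≤ (x' + y) ^ 2 * (x * RL + y * RH) := by
      have A1 : 0 ≤ (x' - x) * ((x + y) * (y * (RH - RL))) :=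
        mul_nonneg (sub_nonneg.2 hxx)
          (mul_nonneg hpos.le (mul_nonneg hy (sub_nonneg.2 hRR)))
      have A2 : 0 ≤ (x' - x) * ((x + y) ^ 2 * RL) :=
        mul_nonneg (sub_nonneg.2 hxx) (mul_nonneg (sq_nonneg _) hRL)
      have A3 : 0 ≤ (x' - x) ^ 2 * (x * RL + y * RH) :=
        mul_nonneg (sq_nonneg _) hS
      nlinarith [A1, A2, A3]
    calc (x + y) * Real.sqrt (x' * RL + y * RH)
        = Real.sqrt ((x + y) ^ 2 * (x' * RL + y * RH)) := by
          rw [Real.sqrt_mul (sq_nonneg _), Real.sqrt_sq hpos.le]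
      _ ≤ Real.sqrt ((x' + y) ^ 2 * (x * RL + y * RH)) := Real.sqrt_le_sqrt hkey
      _ = (x' + y) * Real.sqrt (x * RL + y * RH) := by
          rw [Real.sqrt_mul (sq_nonneg _), Real.sqrt_sq hpos'.le]
  -- mean part
  have hmean : (rL * x' + rH * y) * (x + y) ≤ (rL * x + rH * y) * (x' + y) := by
    nlinarith [mul_nonneg hy (mul_nonneg (sub_nonneg.2 hLH) (sub_nonneg.2 hxx))]
  have hb' : b * ((x + y) * Real.sqrt (x' * RL + y * RH)) ≤
      b * ((x' + y) * Real.sqrt (x * RL + y * RH)) :=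
    mul_le_mul_of_nonneg_left hvol hb
  nlinarith [hb', hmean]

/-- If the per-capita price at the right endpoint `T` is at most the one at `0`,
and the numerator satisfies the chord inequality, then the per-capita price at
any interior point dominates the endpoint price. -/
lemma ratio_endpoint_aux (u0 uT ut n t T : ℝ) (hn : 0 < n) (ht : 0 ≤ t)
    (htT : t ≤ T) (hT0 : 0 < T) (hchord : (T - t) * u0 + t * uT ≤ T * ut)
    (hsp : n * uT ≤ (n + T) * u0) :
    uT / (n + T) ≤ ut / (n + t) := by
  have hnT : 0 < n + T := by linarith
  have hnt : 0 < n + t := by linarith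
  rw [div_le_div_iff₀ hnT hnt]
  · have h1 : (n + T) * ((T - t) * u0 + t * uT) ≤ (n + T) * (T * ut) :=
      mul_le_mul_of_nonneg_left hchord hnT.le
    have h2 : 0 ≤ (T - t) * ((n + T) * u0 - n * uT) :=
      mul_nonneg (sub_nonneg.2 htT) (sub_nonneg.2 hsp)
    have hmul : T * (uT * (n + t)) ≤ T * (ut * (n + T)) := by nlinarith [h1, h2]
    exact le_of_mul_le_mul_left hmul hT0

/-- For the insolvency-based insurance cost function, if the even-split price of
the grand coalition is at most the per-capita cost of the low-risk players
alone, the grand coalition is core-stable under even-split pricing. -/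
theorem even_split_core_stable_insurance
    (V b rL rH : ℝ) (hV : 0 < V) (hb : 0 < b)
    (hrL : 0 < rL) (hLH : rL < rH) (hrH : rH < 1 / 2)
    (c : ℕ → ℕ → ℝ)
    (hc : ∀ nL nH : ℕ, c nL nH =
      V * (rL * nL + rH * nH +
        b * Real.sqrt (nL * (rL * (1 - rL)) + nH * (rH * (1 - rH)))))
    (NL NH : ℕ) (hNL : 1 ≤ NL) (hNH : 1 ≤ NH)
    (hsplit : c NL NH / ((NL : ℝ) + NH) ≤ c NL 0 / (NL : ℝ)) :
    ∀ nL nH : ℕ, nL ≤ NL → nH ≤ NH → 1 ≤ nL + nH →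
      c nL nH / ((nL : ℝ) + nH) ≥ c NL NH / ((NL : ℝ) + NH) := by
  intro nL nH hnL hnH hpos
  have hRL : (0:ℝ) < rL * (1 - rL) := by nlinarith
  have hRH : (0:ℝ) < rH * (1 - rH) := by nlinarith
  have hRR : rL * (1 - rL) ≤ rH * (1 - rH) := by nlinarith
  have hx : (0:ℝ) ≤ (nL : ℝ) := Nat.cast_nonneg _
  have hy : (0:ℝ) ≤ (nH : ℝ) := Nat.cast_nonneg _
  have hxN : (nL : ℝ) ≤ (NL : ℝ) := Nat.cast_le.2 hnL
  have hyN : (nH : ℝ) ≤ (NH : ℝ) := Nat.cast_le.2 hnH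
  have hNLp : (0:ℝ) < (NL : ℝ) := by exact_mod_cast hNL
  have hNHp : (0:ℝ) < (NH : ℝ) := by exact_mod_cast hNH
  have hsum : (0:ℝ) < (nL : ℝ) + (nH : ℝ) := by
    have : (1:ℝ) ≤ (nL : ℝ) + (nH : ℝ) := by exact_mod_cast hpos
    linarith
  -- Step 1: going from (nL, nH) to (NL, nH) lowers the per-capita price
  have step1 :
      (rL * (NL : ℝ) + rH * (nH : ℝ) +
          b * Real.sqrt ((NL : ℝ) * (rL * (1 - rL)) + (nH : ℝ) * (rH * (1 - rH)))) /
        ((NL : ℝ) + (nH : ℝ)) ≤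
      (rL * (nL : ℝ) + rH * (nH : ℝ) +
          b * Real.sqrt ((nL : ℝ) * (rL * (1 - rL)) + (nH : ℝ) * (rH * (1 - rH)))) /
        ((nL : ℝ) + (nH : ℝ)) :=
    stepL_aux rL rH b (rL * (1 - rL)) (rH * (1 - rH)) hb.le hrL.le hLH.le hRL.le hRR
      (nL : ℝ) (NL : ℝ) (nH : ℝ) hx hxN hy hsum
  -- Reformulate hsplit without the factor V
  have h0 : c NL 0 = V * (rL * (NL : ℝ) + b * Real.sqrt ((NL : ℝ) * (rL * (1 - rL)))) := by
    rw [hc]; norm_num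
  have hG : c NL NH = V * (rL * (NL : ℝ) + rH * (NH : ℝ) +
      b * Real.sqrt ((NL : ℝ) * (rL * (1 - rL)) + (NH : ℝ) * (rH * (1 - rH)))) :=
    hc NL NH
  have hsplit' : (rL * (NL : ℝ) + rH * (NH : ℝ) +
      b * Real.sqrt ((NL : ℝ) * (rL * (1 - rL)) + (NH : ℝ) * (rH * (1 - rH)))) /
        ((NL : ℝ) + (NH : ℝ)) ≤
      (rL * (NL : ℝ) + b * Real.sqrt ((NL : ℝ) * (rL * (1 - rL)))) / (NL : ℝ) := by
    rw [hG, h0, mul_div_assoc, mul_div_assoc] at hsplit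
    exact le_of_mul_le_mul_left hsplit hV
  -- Step 2: going from (NL, nH) to (NL, NH) lowers the per-capita price
  have hXnn : (0:ℝ) ≤ (NL : ℝ) * (rL * (1 - rL)) := by positivity
  have hch := sqrt_chord_aux ((NL : ℝ) * (rL * (1 - rL))) (rH * (1 - rH))
    (nH : ℝ) (NH : ℝ) hXnn hRH.le hy hyN
  have hchord : ((NH : ℝ) - (nH : ℝ)) *
        (rL * (NL : ℝ) + b * Real.sqrt ((NL : ℝ) * (rL * (1 - rL)))) +
      (nH : ℝ) * (rL * (NL : ℝ) + rH * (NH : ℝ) +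
        b * Real.sqrt ((NL : ℝ) * (rL * (1 - rL)) + (NH : ℝ) * (rH * (1 - rH)))) ≤
      (NH : ℝ) * (rL * (NL : ℝ) + rH * (nH : ℝ) +
        b * Real.sqrt ((NL : ℝ) * (rL * (1 - rL)) + (nH : ℝ) * (rH * (1 - rH)))) := by
    have hb2 := mul_le_mul_of_nonneg_left hch hb.le
    nlinarith [hb2]
  have hsp : (NL : ℝ) * (rL * (NL : ℝ) + rH * (NH : ℝ) +
      b * Real.sqrt ((NL : ℝ) * (rL * (1 - rL)) + (NH : ℝ) * (rH * (1 - rH)))) ≤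
      ((NL : ℝ) + (NH : ℝ)) *
        (rL * (NL : ℝ) + b * Real.sqrt ((NL : ℝ) * (rL * (1 - rL)))) := by
    rw [div_le_div_iff₀ (by linarith) hNLp] at hsplit'
    linarith [hsplit']
  have step2 := ratio_endpoint_aux
    (rL * (NL : ℝ) + b * Real.sqrt ((NL : ℝ) * (rL * (1 - rL))))
    (rL * (NL : ℝ) + rH * (NH : ℝ) +
      b * Real.sqrt ((NL : ℝ) * (rL * (1 - rL)) + (NH : ℝ) * (rH * (1 - rH))))
    (rL * (NL : ℝ) + rH * (nH : ℝ) +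
      b * Real.sqrt ((NL : ℝ) * (rL * (1 - rL)) + (nH : ℝ) * (rH * (1 - rH))))
    (NL : ℝ) (nH : ℝ) (NH : ℝ) hNLp hy hyN hNHp hchord hsp
  -- combine
  have hfinal := le_trans step2 step1
  rw [ge_iff_le, hG, hc nL nH, mul_div_assoc, mul_div_assoc]
  exact mul_le_mul_of_nonneg_left hfinal hV.le
end

section
/- The even-split price is nonincreasing in the number of low-risk players: for every fixed nH ≥ 0 and all nL ≥ 0 with nL + nH ≥ 1, c(nL + 1, nH)/(nL + 1 + nH) ≤ c(nL, nH)/(nL + nH). -/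
/-- The even-split price is nonincreasing in the number of low-risk players. -/
theorem even_split_price_antitone_in_low
    (c : ℕ → ℕ → ℝ)
    (h0 : c 0 0 = 0)
    (hdimL : ∀ a a' b b' : ℕ, a ≤ a' → b ≤ b' →
      c (a + 1) b - c a b ≥ c (a' + 1) b' - c a' b')
    (hdimH : ∀ a a' b b' : ℕ, a ≤ a' → b ≤ b' →
      c a (b + 1) - c a b ≥ c a' (b' + 1) - c a' b')
    (hcostlier : ∀ a b : ℕ, c (a + 1) b - c a b ≤ c a (b + 1) - c a b) :
    ∀ nL nH : ℕ, 1 ≤ nL + nH →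
      c (nL + 1) nH / ((nL : ℝ) + 1 + nH) ≤ c nL nH / ((nL : ℝ) + nH) := by
  intro nL nH hn
  set δ := c (nL + 1) nH - c nL nH with hδ
  have key1 : ∀ b, b ≤ nH → (b : ℝ) * δ ≤ c 0 b := by
    intro b hb
    induction b with
    | zero => simp [h0]
    | succ b ih =>
      have hb' : b ≤ nH := Nat.le_of_succ_le hb
      have h1 := hdimH 0 nL b b (Nat.zero_le _) le_rfl
      have h2 := hcostlier nL b
      have h3 := hdimL nL nL b nH le_rfl hb'
      have ihb := ih hb'
      push_cast
      nlinarith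
  have key2 : ∀ a, a ≤ nL → ((a : ℝ) + nH) * δ ≤ c a nH := by
    intro a ha
    induction a with
    | zero => simpa using key1 nH le_rfl
    | succ a ih =>
      have ha' : a ≤ nL := Nat.le_of_succ_le ha
      have h1 := hdimL a nL nH nH ha' le_rfl
      have iha := ih ha'
      push_cast
      nlinarith
  have hkey := key2 nL le_rfl
  have hnpos : (0:ℝ) < (nL : ℝ) + nH := by
    have : (1:ℝ) ≤ (nL:ℝ) + nH := by exact_mod_cast hn
    linarith
  rw [div_le_div_iff₀ (by linarith) hnpos]
  nlinarith
end

section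
/- Under max-subsidy pricing: (i) the low-risk price pL(nL, nH) = c(nL, 0)/nL is nonincreasing in nL (for nL ≥ 1) and does not depend on nH; (ii) the high-risk price pH(nL, nH) = (c(nL, nH) − c(nL, 0))/nH is nonincreasing in nL (for nH ≥ 1 fixed); and (iii) pH(nL, nH) is nonincreasing in nH (for nL ≥ 0 fixed and nH ≥ 1). -/
/-- If `f 0 = 0` and increments of `f` are nonincreasing, then the average
`f n / n` is nonincreasing for `n ≥ 1`. -/
lemma avg_mono_aux (f : ℕ → ℝ) (hf0 : f 0 = 0)
    (hd : ∀ a a' : ℕ, a ≤ a' → f (a + 1) - f a ≥ f (a' + 1) - f a')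
    (n : ℕ) (hn : 1 ≤ n) : f (n + 1) / ((n : ℝ) + 1) ≤ f n / (n : ℝ) := by
  have key : ∀ m : ℕ, m ≤ n → (m : ℝ) * (f (n + 1) - f n) ≤ f m := by
    intro m
    induction m with
    | zero => intro _; simp [hf0]
    | succ k ih =>
      intro hk
      have h1 := ih (le_of_lt (Nat.lt_of_succ_le hk))
      have h2 := hd k n (Nat.lt_of_succ_le hk).le
      push_cast
      nlinarith
  have hkey := key n le_rfl
  have hn' : (0 : ℝ) < n := by exact_mod_cast hn
  rw [div_le_div_iff₀ (by positivity) hn']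
  nlinarith

/-- Monotonicity properties of max-subsidy pricing: the low-risk price
`pL nL nH = c nL 0 / nL` is nonincreasing in `nL` and independent of `nH`, and
the high-risk price `pH nL nH = (c nL nH - c nL 0) / nH` is nonincreasing in
both `nL` and `nH`. -/
theorem max_subsidy_price_monotone
    (c : ℕ → ℕ → ℝ)
    (h0 : c 0 0 = 0)
    (hdimL : ∀ a a' b b' : ℕ, a ≤ a' → b ≤ b' →
      c (a + 1) b - c a b ≥ c (a' + 1) b' - c a' b')
    (hdimH : ∀ a a' b b' : ℕ, a ≤ a' → b ≤ b' →
      c a (b + 1) - c a b ≥ c a' (b' + 1) - c a' b') :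
    (∀ nL : ℕ, 1 ≤ nL → c (nL + 1) 0 / ((nL : ℝ) + 1) ≤ c nL 0 / (nL : ℝ)) ∧
    (∀ nL nH : ℕ, 1 ≤ nH →
      (c (nL + 1) nH - c (nL + 1) 0) / (nH : ℝ) ≤ (c nL nH - c nL 0) / (nH : ℝ)) ∧
    (∀ nL nH : ℕ, 1 ≤ nH →
      (c nL (nH + 1) - c nL 0) / ((nH : ℝ) + 1) ≤ (c nL nH - c nL 0) / (nH : ℝ)) := by
  refine ⟨?_, ?_, ?_⟩
  · intro nL hnL
    exact avg_mono_aux (fun n => c n 0) h0 (fun a a' h => hdimL a a' 0 0 h le_rfl) nL hnL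
  · intro nL nH hnH
    have hnH' : (0 : ℝ) < nH := by exact_mod_cast hnH
    have h := hdimL nL nL 0 nH le_rfl (Nat.zero_le _)
    exact div_le_div_of_nonneg_right (by linarith) hnH'.le
  · intro nL nH hnH
    exact avg_mono_aux (fun b => c nL b - c nL 0) (by ring)
      (fun a a' h => by simpa using hdimH nL nL a a' le_rfl h) nH hnH
end

section
/- Under max-subsidy pricing the grand coalition is core-stable: for all integers NL ≥ 1, NH ≥ 1 and every subgroup with 0 ≤ nL ≤ NL and 0 ≤ nH ≤ NH, if nL ≥ 1 then c(nL, 0)/nL ≥ c(NL, 0)/NL, and if nH ≥ 1 then (c(nL, nH) − c(nL, 0))/nH ≥ (c(NL, NH) − c(NL, 0))/NH; hence no subgroup of players can form a pool in which every member pays strictly less than in the grand coalition. -/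
/-
Both prices are average increments of a concave sequence (`c (·, 0)`, resp. `c (nL, ·)`),
and such averages decrease as more terms are averaged. For the high-risk price one also
moves from `nL` to `NL` low-risk players, which can only lower each increment of
`c (·, m)` in `m`.
-/

open Finset

theorem antitoneOn_div_sub_of_antitone_sub (f : ℕ → ℝ)
    (hf : Antitone fun i => f (i + 1) - f i) :
    AntitoneOn (fun n : ℕ => (f n - f 0) / n) (Set.Ici 1) := by
  refine antitoneOn_nat_Ici_of_succ_le fun k hk => ?_
  have hk_pos : (0 : ℝ) < k := by exact_mod_cast hk
  have h_increment : (k : ℝ) * (f (k + 1) - f k) ≤ f k - f 0 :=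
    calc (k : ℝ) * (f (k + 1) - f k) = ∑ _i ∈ range k, (f (k + 1) - f k) := by
          rw [sum_const, card_range, nsmul_eq_mul]
      _ ≤ ∑ i ∈ range k, (f (i + 1) - f i) :=
        sum_le_sum fun i hi => hf (mem_range.mp hi).le
      _ = f k - f 0 := sum_range_sub f k
  push_cast
  rw [div_le_div_iff₀ (by positivity) hk_pos]
  linarith

theorem max_subsidy_core_stable_general
    (c : ℕ → ℕ → ℝ)
    (h0 : c 0 0 = 0)
    (hdimL : ∀ a a' b b' : ℕ, a ≤ a' → b ≤ b' →
      c (a + 1) b - c a b ≥ c (a' + 1) b' - c a' b')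
    (hdimH : ∀ a a' b b' : ℕ, a ≤ a' → b ≤ b' →
      c a (b + 1) - c a b ≥ c a' (b' + 1) - c a' b')
    (NL NH : ℕ) :
    ∀ nL nH : ℕ, nL ≤ NL → nH ≤ NH →
      (1 ≤ nL → c nL 0 / (nL : ℝ) ≥ c NL 0 / (NL : ℝ)) ∧
      (1 ≤ nH → (c nL nH - c nL 0) / (nH : ℝ) ≥
        (c NL NH - c NL 0) / (NH : ℝ)) := by
  intro nL nH hnL hnH
  refine ⟨fun hnL_pos => ?_, fun hnH_pos => ?_⟩
  · have h_avg := antitoneOn_div_sub_of_antitone_sub (fun a => c a 0)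
      (fun i j hij => hdimL i j 0 0 hij le_rfl) hnL_pos (le_trans hnL_pos hnL) hnL
    simpa only [h0, sub_zero] using h_avg
  · have h_gap : Monotone fun m => c nL m - c NL m :=
      monotone_nat_of_le_succ fun m => by linarith [hdimH nL NL m m hnL le_rfl]
    calc (c NL NH - c NL 0) / (NH : ℝ)
        ≤ (c NL nH - c NL 0) / (nH : ℝ) :=
          antitoneOn_div_sub_of_antitone_sub (c NL) (fun i j hij => hdimH NL NL i j le_rfl hij)
            hnH_pos (le_trans hnH_pos hnH) hnH
      _ ≤ (c nL nH - c nL 0) / (nH : ℝ) := by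
          gcongr ?_ / _
          linarith [show c nL 0 - c NL 0 ≤ c nL nH - c NL nH from h_gap (Nat.zero_le nH)]

/-- Under max-subsidy pricing the grand coalition is core-stable: no subgroup
offers every one of its members a strictly lower price than the grand coalition. -/
theorem max_subsidy_core_stable
    (c : ℕ → ℕ → ℝ)
    (h0 : c 0 0 = 0)
    (hdimL : ∀ a a' b b' : ℕ, a ≤ a' → b ≤ b' →
      c (a + 1) b - c a b ≥ c (a' + 1) b' - c a' b')
    (hdimH : ∀ a a' b b' : ℕ, a ≤ a' → b ≤ b' →
      c a (b + 1) - c a b ≥ c a' (b' + 1) - c a' b')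
    (NL NH : ℕ) (hNL : 1 ≤ NL) (hNH : 1 ≤ NH) :
    ∀ nL nH : ℕ, nL ≤ NL → nH ≤ NH →
      (1 ≤ nL → c nL 0 / (nL : ℝ) ≥ c NL 0 / (NL : ℝ)) ∧
      (1 ≤ nH → (c nL nH - c nL 0) / (nH : ℝ) ≥
        (c NL NH - c NL 0) / (NH : ℝ)) :=
  max_subsidy_core_stable_general c h0 hdimL hdimH NL NH
end

section
/- Efficiency together with independence of prices forces the cost function to be additive across risk types: fix integers nL ≥ 1 and nH ≥ 1, a cost function c : ℝ × ℝ → ℝ with c(0,0) = 0, and price functions pL, pH : ℝ × ℝ → ℝ such that (efficiency) nL·pL(rL, rH) + nH·pH(rL, rH) = c(rL, rH) for all rL, rH ≥ 0, (independence of pL) pL(rL, rH) = pL(rL, rH') for all rL, rH, rH' ≥ 0, and (independence of pH) pH(rL, rH) = pH(rL', rH) for all rL, rL', rH ≥ 0. Then c(rL, rH) = c(rL, 0) + c(0, rH) for all rL, rH ≥ 0. In particular, if c is strictly submodular in the sense that c(rL, rH) < c(rL, 0) + c(0, rH) for some rL, rH ≥ 0, no such pricing scheme exists. -/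
/-- Efficiency together with independence of the prices from the other group's
risk forces the cost function to be additive across risk types; in particular,
if the cost function is strictly submodular somewhere, no such pricing scheme
exists. -/
theorem efficiency_and_independence_force_additivity
    (nL nH : ℕ) (hnL : 1 ≤ nL) (hnH : 1 ≤ nH)
    (c : ℝ → ℝ → ℝ) (h0 : c 0 0 = 0)
    (pL pH : ℝ → ℝ → ℝ)
    (heff : ∀ rL rH : ℝ, 0 ≤ rL → 0 ≤ rH →
      (nL : ℝ) * pL rL rH + (nH : ℝ) * pH rL rH = c rL rH)
    (hindL : ∀ rL rH rH' : ℝ, 0 ≤ rL → 0 ≤ rH → 0 ≤ rH' →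
      pL rL rH = pL rL rH')
    (hindH : ∀ rL rL' rH : ℝ, 0 ≤ rL → 0 ≤ rL' → 0 ≤ rH →
      pH rL rH = pH rL' rH) :
    (∀ rL rH : ℝ, 0 ≤ rL → 0 ≤ rH → c rL rH = c rL 0 + c 0 rH) ∧
    ((∃ rL rH : ℝ, 0 ≤ rL ∧ 0 ≤ rH ∧ c rL rH < c rL 0 + c 0 rH) → False) := by
  have key : ∀ rL rH : ℝ, 0 ≤ rL → 0 ≤ rH → c rL rH = c rL 0 + c 0 rH := by
    intro rL rH hL hH
    have e1 := heff rL rH hL hH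
    have e2 := heff rL 0 hL le_rfl
    have e3 := heff 0 rH le_rfl hH
    have e4 := heff 0 0 le_rfl le_rfl
    have l1 : pL rL rH = pL rL 0 := hindL rL rH 0 hL hH le_rfl
    have l2 : pL 0 rH = pL 0 0 := hindL 0 rH 0 le_rfl hH le_rfl
    have l3 : pH rL rH = pH 0 rH := hindH rL 0 rH hL le_rfl hH
    have l4 : pH rL 0 = pH 0 0 := hindH rL 0 0 hL le_rfl le_rfl
    rw [h0] at e4
    nlinarith [e1, e2, e3, e4]
  refine ⟨key, ?_⟩
  rintro ⟨rL, rH, hL, hH, hlt⟩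
  exact absurd (key rL rH hL hH) (ne_of_lt hlt)
end

section
/- Fix integers nL ≥ 1 and nH ≥ 1, a cost function c : ℝ × ℝ → ℝ with c(0,0) = 0 such that rH ↦ c(rL, rH) is continuous at rH = 0 for every rL ≥ 0, and price functions pL, pH : ℝ × ℝ → ℝ. Suppose there is a constant k such that for every rL ≥ 0, pH(rL, rH) → k as rH → 0⁺. Then the following three properties cannot hold simultaneously: (1) efficiency: nL·pL(rL, rH) + nH·pH(rL, rH) = c(rL, rH) for all rL, rH ≥ 0; (2) aligned incentives: there exists r > 0 such that for every rL ≥ 0 the map rH ↦ pL(rL, rH) is strictly increasing on [0, r]; (3) stability: for all rL > 0 and rH > 0, pL(rL, rH) < c(rL, 0)/nL and pH(rL, rH) < c(0, rH)/nH. -/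
/-- Efficiency, aligned incentives, and stability cannot hold simultaneously,
given that the high-risk price tends to a constant `k` as the high risk tends
to 0 from above. -/
theorem no_efficient_aligned_stable_pricing
    (nL nH : ℕ) (hnL : 1 ≤ nL) (hnH : 1 ≤ nH)
    (c : ℝ → ℝ → ℝ) (h0 : c 0 0 = 0)
    (hcont : ∀ rL : ℝ, 0 ≤ rL →
      Filter.Tendsto (fun rH => c rL rH) (nhdsWithin 0 (Set.Ioi 0)) (nhds (c rL 0)))
    (pL pH : ℝ → ℝ → ℝ) (k : ℝ)
    (hlim : ∀ rL : ℝ, 0 ≤ rL →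
      Filter.Tendsto (fun rH => pH rL rH) (nhdsWithin 0 (Set.Ioi 0)) (nhds k)) :
    ¬((∀ rL rH : ℝ, 0 ≤ rL → 0 ≤ rH →
        (nL : ℝ) * pL rL rH + (nH : ℝ) * pH rL rH = c rL rH) ∧
      (∃ r > (0 : ℝ), ∀ rL : ℝ, 0 ≤ rL →
        StrictMonoOn (fun rH => pL rL rH) (Set.Icc 0 r)) ∧
      (∀ rL rH : ℝ, 0 < rL → 0 < rH →
        pL rL rH < c rL 0 / (nL : ℝ) ∧ pH rL rH < c 0 rH / (nH : ℝ))) := by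
  rintro ⟨heff, ⟨r, hr, hmono⟩, hstab⟩
  have hnL' : (0:ℝ) < nL := by exact_mod_cast hnL
  have hnH' : (0:ℝ) < nH := by exact_mod_cast hnH
  have hk0 : k ≤ 0 := by
    have h1 : Filter.Tendsto (fun rH => c 0 rH / (nH:ℝ)) (nhdsWithin 0 (Set.Ioi 0))
        (nhds 0) := by
      have := (hcont 0 le_rfl).div_const (nH:ℝ)
      simpa [h0] using this
    refine le_of_tendsto_of_tendsto (hlim 1 one_pos.le) h1 ?_
    filter_upwards [self_mem_nhdsWithin] with x hx
    exact (hstab 1 x one_pos hx).2.le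
  have hpL : Filter.Tendsto (fun rH => pL 1 rH) (nhdsWithin 0 (Set.Ioi 0))
      (nhds ((c 1 0 - (nH:ℝ) * k) / (nL:ℝ))) := by
    have h2 : Filter.Tendsto (fun rH => (c 1 rH - (nH:ℝ) * pH 1 rH) / (nL:ℝ))
        (nhdsWithin 0 (Set.Ioi 0)) (nhds ((c 1 0 - (nH:ℝ) * k) / (nL:ℝ))) :=
      ((hcont 1 one_pos.le).sub ((hlim 1 one_pos.le).const_mul _)).div_const _
    refine h2.congr' ?_
    filter_upwards [self_mem_nhdsWithin] with x hx
    have h3 := heff 1 x one_pos.le (le_of_lt hx)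
    field_simp
    linarith
  have hub : (c 1 0 - (nH:ℝ) * k) / (nL:ℝ) ≤ pL 1 r := by
    refine le_of_tendsto hpL ?_
    filter_upwards [Ioo_mem_nhdsGT_of_mem (⟨le_rfl, hr⟩ : (0:ℝ) ∈ Set.Ico 0 r)]
      with x hx
    exact (hmono 1 one_pos.le ⟨hx.1.le, hx.2.le⟩ ⟨hr.le, le_rfl⟩ hx.2).le
  have hlt : pL 1 r < c 1 0 / (nL:ℝ) := (hstab 1 r one_pos hr).1
  have h4 : (c 1 0 - (nH:ℝ) * k) / (nL:ℝ) < c 1 0 / (nL:ℝ) := lt_of_le_of_lt hub hlt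
  rw [div_lt_div_iff₀ hnL' hnL'] at h4
  nlinarith [mul_nonneg (mul_nonneg hnH'.le (neg_nonneg.mpr hk0)) hnL'.le]
end

section
/- For reals RL > 0, RH > 0 and integers nL ≥ 0, the function nH ↦ (√(nL·RL + nH·RH) − √(nL·RL))/nH is strictly decreasing in nH ∈ {1, 2, 3, …}, and for every fixed integer nH ≥ 1 the function nL ↦ (√(nL·RL + nH·RH) − √(nL·RL))/nH is strictly decreasing in nL ∈ {0, 1, 2, …}. Consequently, the max-subsidy high-risk insurance premium pH(nL, nH) = V·(rH + b·(√(nL·RL + nH·RH) − √(nL·RL))/nH) is strictly decreasing in both nL and nH. -/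
/-- The averaged marginal standard-deviation term is strictly decreasing in the
number of high-risk players and in the number of low-risk players; consequently
the max-subsidy high-risk premium is strictly decreasing in both. -/
theorem max_subsidy_high_premium_strict_anti
    (V b rL rH : ℝ) (hV : 0 < V) (hb : 0 < b)
    (hrL : 0 < rL) (hLH : rL < rH) (hrH : rH < 1 / 2)
    (RL RH : ℝ) (hRL : RL = rL * (1 - rL)) (hRH : RH = rH * (1 - rH))
    (f : ℕ → ℕ → ℝ)
    (hf : ∀ nL nH : ℕ, f nL nH =
      (Real.sqrt ((nL : ℝ) * RL + (nH : ℝ) * RH) - Real.sqrt ((nL : ℝ) * RL)) / (nH : ℝ))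
    (pH : ℕ → ℕ → ℝ)
    (hpH : ∀ nL nH : ℕ, pH nL nH = V * (rH + b * f nL nH)) :
    (∀ nL nH nH' : ℕ, 1 ≤ nH → nH < nH' → f nL nH' < f nL nH) ∧
    (∀ nL nL' nH : ℕ, 1 ≤ nH → nL < nL' → f nL' nH < f nL nH) ∧
    (∀ nL nH nH' : ℕ, 1 ≤ nH → nH < nH' → pH nL nH' < pH nL nH) ∧
    (∀ nL nL' nH : ℕ, 1 ≤ nH → nL < nL' → pH nL' nH < pH nL nH) := by
  have hRL0 : 0 < RL := by nlinarith
  have hRH0 : 0 < RH := by nlinarith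
  -- rationalized form
  have key : ∀ nL nH : ℕ, 1 ≤ nH →
      f nL nH = RH / (Real.sqrt ((nL : ℝ) * RL + (nH : ℝ) * RH)
        + Real.sqrt ((nL : ℝ) * RL)) := by
    intro nL nH hn
    have hn' : (1 : ℝ) ≤ (nH : ℝ) := by exact_mod_cast hn
    have hA : (0 : ℝ) ≤ (nL : ℝ) * RL :=
      mul_nonneg (Nat.cast_nonneg _) hRL0.le
    have hS : (0 : ℝ) < (nL : ℝ) * RL + (nH : ℝ) * RH := by nlinarith
    have hden : (0 : ℝ) < Real.sqrt ((nL : ℝ) * RL + (nH : ℝ) * RH)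
        + Real.sqrt ((nL : ℝ) * RL) := by
      have := Real.sqrt_pos.2 hS
      have := Real.sqrt_nonneg ((nL : ℝ) * RL)
      linarith
    have h1 : Real.sqrt ((nL : ℝ) * RL + (nH : ℝ) * RH) ^ 2
        = (nL : ℝ) * RL + (nH : ℝ) * RH := Real.sq_sqrt hS.le
    have h2 : Real.sqrt ((nL : ℝ) * RL) ^ 2 = (nL : ℝ) * RL := Real.sq_sqrt hA
    rw [hf, div_eq_div_iff (by positivity) hden.ne']
    nlinarith [h1, h2]
  have hden_pos : ∀ nL nH : ℕ, 1 ≤ nH →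
      (0 : ℝ) < Real.sqrt ((nL : ℝ) * RL + (nH : ℝ) * RH)
        + Real.sqrt ((nL : ℝ) * RL) := by
    intro nL nH hn
    have hn' : (1 : ℝ) ≤ (nH : ℝ) := by exact_mod_cast hn
    have hA : (0 : ℝ) ≤ (nL : ℝ) * RL :=
      mul_nonneg (Nat.cast_nonneg _) hRL0.le
    have hS : (0 : ℝ) < (nL : ℝ) * RL + (nH : ℝ) * RH := by nlinarith
    have := Real.sqrt_pos.2 hS
    have := Real.sqrt_nonneg ((nL : ℝ) * RL)
    linarith
  have fH : ∀ nL nH nH' : ℕ, 1 ≤ nH → nH < nH' → f nL nH' < f nL nH := by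
    intro nL nH nH' hn hlt
    have hn2 : 1 ≤ nH' := le_trans hn hlt.le
    rw [key nL nH hn, key nL nH' hn2]
    apply div_lt_div_of_pos_left hRH0 (hden_pos nL nH hn)
    have hlt' : (nH : ℝ) < (nH' : ℝ) := by exact_mod_cast hlt
    have : Real.sqrt ((nL : ℝ) * RL + (nH : ℝ) * RH)
        < Real.sqrt ((nL : ℝ) * RL + (nH' : ℝ) * RH) := by
      apply Real.sqrt_lt_sqrt
      · have : (0 : ℝ) ≤ (nL : ℝ) * RL := mul_nonneg (Nat.cast_nonneg _) hRL0.le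
        nlinarith [Nat.cast_nonneg (α := ℝ) nH]
      · nlinarith
    linarith
  have fL : ∀ nL nL' nH : ℕ, 1 ≤ nH → nL < nL' → f nL' nH < f nL nH := by
    intro nL nL' nH hn hlt
    rw [key nL nH hn, key nL' nH hn]
    apply div_lt_div_of_pos_left hRH0 (hden_pos nL nH hn)
    have hlt' : (nL : ℝ) < (nL' : ℝ) := by exact_mod_cast hlt
    have hA : (0 : ℝ) ≤ (nL : ℝ) * RL := mul_nonneg (Nat.cast_nonneg _) hRL0.le
    have hn' : (1 : ℝ) ≤ (nH : ℝ) := by exact_mod_cast hn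
    have h1 : Real.sqrt ((nL : ℝ) * RL + (nH : ℝ) * RH)
        < Real.sqrt ((nL' : ℝ) * RL + (nH : ℝ) * RH) := by
      apply Real.sqrt_lt_sqrt
      · nlinarith
      · nlinarith
    have h2 : Real.sqrt ((nL : ℝ) * RL) < Real.sqrt ((nL' : ℝ) * RL) := by
      apply Real.sqrt_lt_sqrt hA
      nlinarith
    linarith
  refine ⟨fH, fL, ?_, ?_⟩
  · intro nL nH nH' hn hlt
    rw [hpH, hpH]
    have := fH nL nH nH' hn hlt
    nlinarith [mul_pos hV hb]
  · intro nL nL' nH hn hlt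
    rw [hpH, hpH]
    have := fL nL nL' nH hn hlt
    nlinarith [mul_pos hV hb]
end

section
/- Under proportional pricing, adding another participant of either type strictly reduces every individual's premium: the prices pL(nL, nH) = V·(rL + b·RL/√(RL·nL + RH·nH)) and pH(nL, nH) = V·(rH + b·RH/√(RL·nL + RH·nH)) are each strictly decreasing in nL and strictly decreasing in nH (over integers nL, nH ≥ 0 with nL + nH ≥ 1). Consequently each player's price is minimized at the grand coalition, so the grand coalition is core-stable under proportional pricing. -/
/-! A premium `V * (r + k / √s)` with `k > 0` strictly decreases in the pool's total variance `s`,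
and adding a member of either type, or passing to a larger pool, strictly (resp. weakly) increases
that variance. -/

open Real Set

theorem strictAntiOn_premium {V r k : ℝ} (hV : 0 < V) (hk : 0 < k) :
    StrictAntiOn (fun s : ℝ => V * (r + k / √s)) (Ioi 0) := fun _ hs _ _ hst =>
  mul_lt_mul_of_pos_left
    (add_lt_add_right (div_lt_div_of_pos_left hk (sqrt_pos.2 hs) (sqrt_lt_sqrt hs.le hst)) r) hV

theorem bernoulli_variance_pos {r : ℝ} (h0 : 0 < r) (h1 : r < 1) : 0 < r * (1 - r) :=
  mul_pos h0 (sub_pos.2 h1)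

theorem pool_variance_pos {a b : ℝ} (ha : 0 < a) (hb : 0 < b) {m n : ℕ} (h : 1 ≤ m + n) :
    0 < a * m + b * n := by
  rcases Nat.eq_zero_or_pos m with rfl | hm
  · have hn : (0 : ℝ) < n := by exact_mod_cast (by omega : 0 < n)
    simpa using mul_pos hb hn
  · have hm : (0 : ℝ) < m := by exact_mod_cast hm
    exact add_pos_of_pos_of_nonneg (mul_pos ha hm) (by positivity)

/-- Under proportional pricing, adding another participant of either type
strictly reduces every individual's premium; consequently each player's price
is minimized at the grand coalition, so the grand coalition is core-stable. -/
theorem proportional_pricing_strict_anti_and_stable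
    (V b rL rH : ℝ) (hV : 0 < V) (hb : 0 < b)
    (hrL : 0 < rL) (hLH : rL < rH) (hrH : rH < 1 / 2)
    (RL RH : ℝ) (hRL : RL = rL * (1 - rL)) (hRH : RH = rH * (1 - rH))
    (pL pH : ℕ → ℕ → ℝ)
    (hpL : ∀ nL nH : ℕ, pL nL nH =
      V * (rL + b * RL / Real.sqrt (RL * (nL : ℝ) + RH * (nH : ℝ))))
    (hpH : ∀ nL nH : ℕ, pH nL nH =
      V * (rH + b * RH / Real.sqrt (RL * (nL : ℝ) + RH * (nH : ℝ)))) :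
    (∀ nL nH : ℕ, 1 ≤ nL + nH →
      pL (nL + 1) nH < pL nL nH ∧ pL nL (nH + 1) < pL nL nH ∧
      pH (nL + 1) nH < pH nL nH ∧ pH nL (nH + 1) < pH nL nH) ∧
    (∀ NL NH nL nH : ℕ, nL ≤ NL → nH ≤ NH → 1 ≤ nL + nH →
      pL NL NH ≤ pL nL nH ∧ pH NL NH ≤ pH nL nH) := by
  have hRL0 : 0 < RL := hRL ▸ bernoulli_variance_pos hrL (by linarith)
  have hRH0 : 0 < RH := hRH ▸ bernoulli_variance_pos (hrL.trans hLH) (by linarith)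
  have hpremL := strictAntiOn_premium (r := rL) hV (mul_pos hb hRL0)
  have hpremH := strictAntiOn_premium (r := rH) hV (mul_pos hb hRH0)
  refine ⟨fun nL nH h => ?_, fun NL NH nL nH hL hH h => ?_⟩
  · have hs := pool_variance_pos hRL0 hRH0 h
    have hL : RL * nL + RH * nH < RL * ↑(nL + 1) + RH * nH := by push_cast; linarith
    have hH : RL * nL + RH * nH < RL * nL + RH * ↑(nH + 1) := by push_cast; linarith
    simp only [hpL, hpH]
    exact ⟨hpremL hs (hs.trans hL) hL, hpremL hs (hs.trans hH) hH,
      hpremH hs (hs.trans hL) hL, hpremH hs (hs.trans hH) hH⟩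
  · have hs := pool_variance_pos hRL0 hRH0 h
    have hle : RL * nL + RH * nH ≤ RL * NL + RH * NH := by gcongr
    simp only [hpL, hpH]
    exact ⟨hpremL.antitoneOn hs (hs.trans_le hle) hle, hpremH.antitoneOn hs (hs.trans_le hle) hle⟩
end

section
/- Proportional pricing creates an anti-social incentive: fix V > 0, b > 0, integers nL ≥ 1, nH ≥ 1, and rL ∈ (0, 1/2) with RL = rL·(1 − rL). Then the low-risk proportional price pL(rH) = V·(rL + b·RL/√(RL·nL + rH·(1 − rH)·nH)), viewed as a function of the high-risk level rH, is strictly decreasing on the interval (0, 1/2); that is, low-risk players pay strictly less when their partners are riskier. -/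
/-- Proportional pricing creates an anti-social incentive: the low-risk
proportional price is strictly decreasing in the risk level of the high-risk
partners on (0, 1/2). -/
theorem proportional_price_anti_social
    (V b : ℝ) (hV : 0 < V) (hb : 0 < b)
    (nL nH : ℕ) (hnL : 1 ≤ nL) (hnH : 1 ≤ nH)
    (rL : ℝ) (hrL0 : 0 < rL) (hrL2 : rL < 1 / 2)
    (RL : ℝ) (hRL : RL = rL * (1 - rL))
    (pL : ℝ → ℝ)
    (hpL : ∀ rH : ℝ, pL rH =
      V * (rL + b * RL / Real.sqrt (RL * (nL : ℝ) + rH * (1 - rH) * (nH : ℝ)))) :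
    StrictAntiOn pL (Set.Ioo 0 (1 / 2)) := by
  intro x hx y hy hxy
  obtain ⟨hx0, hx2⟩ := hx
  obtain ⟨hy0, hy2⟩ := hy
  have hRL0 : 0 < RL := by
    rw [hRL]; exact mul_pos hrL0 (by linarith)
  have hnL' : (1 : ℝ) ≤ (nL : ℝ) := by exact_mod_cast hnL
  have hnH' : (0 : ℝ) < (nH : ℝ) := by
    have : (1 : ℝ) ≤ (nH : ℝ) := by exact_mod_cast hnH
    linarith
  have hAx : 0 < RL * (nL : ℝ) + x * (1 - x) * (nH : ℝ) := by
    have h1 : 0 < RL * (nL : ℝ) := by positivity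
    have h2 : 0 ≤ x * (1 - x) * (nH : ℝ) := by
      have : 0 ≤ x * (1 - x) := mul_nonneg hx0.le (by linarith)
      positivity
    linarith
  have hAxy : RL * (nL : ℝ) + x * (1 - x) * (nH : ℝ)
      < RL * (nL : ℝ) + y * (1 - y) * (nH : ℝ) := by
    have : x * (1 - x) < y * (1 - y) := by nlinarith
    nlinarith
  have hsx : 0 < Real.sqrt (RL * (nL : ℝ) + x * (1 - x) * (nH : ℝ)) :=
    Real.sqrt_pos.mpr hAx
  have hsqrt : Real.sqrt (RL * (nL : ℝ) + x * (1 - x) * (nH : ℝ))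
      < Real.sqrt (RL * (nL : ℝ) + y * (1 - y) * (nH : ℝ)) :=
    Real.sqrt_lt_sqrt hAx.le hAxy
  have hdiv : b * RL / Real.sqrt (RL * (nL : ℝ) + y * (1 - y) * (nH : ℝ))
      < b * RL / Real.sqrt (RL * (nL : ℝ) + x * (1 - x) * (nH : ℝ)) :=
    div_lt_div_of_pos_left (by positivity) hsx hsqrt
  rw [hpL x, hpL y]
  have := mul_lt_mul_of_pos_left (add_lt_add_left hdiv rL) hV
  linarith
end

section
/- For the insolvency-based insurance cost function c, the marginal cost of adding a low-risk player is strictly less than the marginal cost of adding a high-risk player: for all integers nL ≥ 0 and nH ≥ 0, c(nL + 1, nH) − c(nL, nH) < c(nL, nH + 1) − c(nL, nH). -/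
/-- For the insolvency-based insurance cost function, the marginal cost of
adding a low-risk player is strictly less than the marginal cost of adding a
high-risk player. -/
theorem low_risk_marginal_cost_lt_high
    (V b rL rH : ℝ) (hV : 0 < V) (hb : 0 < b)
    (hrL : 0 < rL) (hLH : rL < rH) (hrH : rH < 1 / 2)
    (c : ℕ → ℕ → ℝ)
    (hc : ∀ nL nH : ℕ, c nL nH =
      V * (rL * nL + rH * nH +
        b * Real.sqrt (nL * (rL * (1 - rL)) + nH * (rH * (1 - rH)))))
    (nL nH : ℕ) :
    c (nL + 1) nH - c nL nH < c nL (nH + 1) - c nL nH := by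
  have h1 : (0:ℝ) < rL * (1 - rL) := by nlinarith
  have h2 : rL * (1 - rL) < rH * (1 - rH) := by nlinarith
  have hnL : (0:ℝ) ≤ (nL:ℝ) := Nat.cast_nonneg _
  have hnH : (0:ℝ) ≤ (nH:ℝ) := Nat.cast_nonneg _
  have hsq := Real.sqrt_lt_sqrt (by nlinarith :
      (0:ℝ) ≤ (nL:ℝ) * (rL * (1 - rL)) + nH * (rH * (1 - rH)) + rL * (1 - rL))
    (by linarith :
      (nL:ℝ) * (rL * (1 - rL)) + nH * (rH * (1 - rH)) + rL * (1 - rL)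
        < (nL:ℝ) * (rL * (1 - rL)) + nH * (rH * (1 - rH)) + rH * (1 - rH))
  have e1 : ((nL:ℝ) + 1) * (rL * (1 - rL)) + nH * (rH * (1 - rH))
      = (nL:ℝ) * (rL * (1 - rL)) + nH * (rH * (1 - rH)) + rL * (1 - rL) := by ring
  have e2 : (nL:ℝ) * (rL * (1 - rL)) + ((nH:ℝ) + 1) * (rH * (1 - rH))
      = (nL:ℝ) * (rL * (1 - rL)) + nH * (rH * (1 - rH)) + rH * (1 - rH) := by ring
  rw [hc, hc, hc]
  push_cast
  rw [e1, e2]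
  nlinarith [mul_pos (mul_pos hV hb) (sub_pos.mpr hsq), mul_pos hV (sub_pos.mpr hLH)]
end
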